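/- arXiv:1211.3269 — 3 statements merged into one kernel-verified Lean document; each statement's English description precedes it below -/
import Mathlib

section
/- Let n ≥ 3 and s ≥ 1 be integers, and let a = (a_1, …, a_n) ∈ ℤ^n be a primitive vector with all entries positive. Then the s-Frobenius number satisfies F_s(a) ≥ ϑ_s(S_{n−1}) · (a_1 a_2 ⋯ a_n)^{1/(n−1)} − (a_1 + a_2 + ⋯ + a_n), where ϑ_s(S_{n−1}) is the absolute s-inhomogeneous minimum of the standard (n−1)-dimensional simplex. -/
open scoped BigOperators
open Matrix

noncomputable section

/-- The real matrix obtained from an integer matrix. -/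
def Rmat {m n : ℕ} (A : Matrix (Fin m) (Fin n) ℤ) : Matrix (Fin m) (Fin n) ℝ :=
  A.map (Int.cast : ℤ → ℝ)

/-- The real vector obtained from an integer vector. -/
def Rvec {m : ℕ} (b : Fin m → ℤ) : Fin m → ℝ := fun i => (b i : ℝ)

/-- The knapsack polytope P(A,b) = {x ≥ 0 : A x = b}. -/
def knap {m n : ℕ} (A : Matrix (Fin m) (Fin n) ℤ) (b : Fin m → ℝ) : Set (Fin n → ℝ) :=
  {x | (∀ i, 0 ≤ x i) ∧ (Rmat A).mulVec x = b}

/-- The set F_s(A) of integer vectors b for which P(A,b) contains at least s integer points. -/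
def feas {m n : ℕ} (s : ℕ) (A : Matrix (Fin m) (Fin n) ℤ) : Set (Fin m → ℤ) :=
  {b | s ≤ Set.ncard {x : Fin n → ℤ | (∀ i, 0 ≤ x i) ∧ A.mulVec x = b}}

/-- The cone generated by the columns of A. -/
def coneOf {m n : ℕ} (A : Matrix (Fin m) (Fin n) ℤ) : Set (Fin m → ℝ) :=
  {y | ∃ x : Fin n → ℝ, (∀ i, 0 ≤ x i) ∧ (Rmat A).mulVec x = y}

/-- The generalized diagonal s-Frobenius number g_s(A, w). -/
def gDiag {m n : ℕ} (s : ℕ) (A : Matrix (Fin m) (Fin n) ℤ) (w : Fin m → ℝ) : ℝ :=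
  sInf {t : ℝ | 0 ≤ t ∧
    ∀ b : Fin m → ℤ, Rvec b ∈ interior ((fun c => t • w + c) '' coneOf A) → b ∈ feas s A}

/-- v = A·1 is the sum of the columns of A (as a real vector). -/
def vA {m n : ℕ} (A : Matrix (Fin m) (Fin n) ℤ) : Fin m → ℝ :=
  (Rmat A).mulVec (fun _ => 1)

/-- The diagonal s-Frobenius number g_s(A) = g_s(A, A·1). -/
def gFrob {m n : ℕ} (s : ℕ) (A : Matrix (Fin m) (Fin n) ℤ) : ℝ := gDiag s A (vA A)

/-- The regularity assumptions: the m×m minors of A have gcd 1, and the only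
nonnegative real solution of A x = 0 is x = 0. -/
def regular {m n : ℕ} (A : Matrix (Fin m) (Fin n) ℤ) : Prop :=
  Finset.univ.gcd (fun I : Fin m ↪ Fin n => (A.submatrix id ⇑I).det) = 1 ∧
  ∀ x : Fin n → ℝ, (∀ i, 0 ≤ x i) → (Rmat A).mulVec x = 0 → x = 0

/-- The s-covering radius of K with respect to L: the smallest μ > 0 such that every
point of the real span of L lies in y + μK for at least s distinct y ∈ L. -/
def muCov {N : ℕ} (s : ℕ) (K L : Set (Fin N → ℝ)) : ℝ :=
  sInf {μ : ℝ | 0 < μ ∧ ∀ x ∈ Submodule.span ℝ L,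
    ∃ T : Finset (Fin N → ℝ), ↑T ⊆ L ∧ s ≤ T.card ∧ ∀ y ∈ T, ∃ k ∈ K, x = y + μ • k}

/-- The set of absolute values of m×m minors of A. -/
def minorAbs {m n : ℕ} (A : Matrix (Fin m) (Fin n) ℤ) : Set ℤ :=
  {d | ∃ I : Fin m ↪ Fin n, d = |(A.submatrix id ⇑I).det|}

/-- m(A): the minimal absolute m×m minor of A. -/
def mMin {m n : ℕ} (A : Matrix (Fin m) (Fin n) ℤ) : ℤ := sInf (minorAbs A)

/-- M(A): the maximal absolute m×m minor of A. -/
def mMax {m n : ℕ} (A : Matrix (Fin m) (Fin n) ℤ) : ℤ := sSup (minorAbs A)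

/-- The lattice L_A^⊥ = {z ∈ ℤ^n : A z = 0}, viewed as a subset of ℝ^n. -/
def kerLat {m n : ℕ} (A : Matrix (Fin m) (Fin n) ℤ) : Set (Fin n → ℝ) :=
  {x | ∃ z : Fin n → ℤ, A.mulVec z = 0 ∧ x = Rvec z}

/-- √(det (A Aᵀ)). -/
def sqrtDet {m n : ℕ} (A : Matrix (Fin m) (Fin n) ℤ) : ℝ :=
  Real.sqrt (((A * Aᵀ).det : ℤ) : ℝ)

/-- The s-Frobenius number of a positive primitive integer vector. -/
def sFrob {n : ℕ} (s : ℕ) (a : Fin n → ℤ) : ℤ :=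
  sSup {b : ℤ | Set.ncard {x : Fin n → ℤ | (∀ i, 0 ≤ x i) ∧ ∑ i, a i * x i = b} < s}

/-- The full-rank lattice in ℝ^d with basis the columns of an invertible matrix B. -/
def latSet {d : ℕ} (B : Matrix (Fin d) (Fin d) ℝ) : Set (Fin d → ℝ) :=
  {x | ∃ z : Fin d → ℤ, x = B.mulVec (fun i => (z i : ℝ))}

/-- The absolute s-inhomogeneous minimum ϑ_s(K) = inf_L μ_s(K,L)/det(L)^{1/d}. -/
def theta (s d : ℕ) (K : Set (Fin d → ℝ)) : ℝ :=
  sInf {r : ℝ | ∃ B : Matrix (Fin d) (Fin d) ℝ, B.det ≠ 0 ∧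
    r = muCov s K (latSet B) / |B.det| ^ ((1 : ℝ) / d)}

/-- The standard simplex S_d ⊂ ℝ^d. -/
def stdSimplex' (d : ℕ) : Set (Fin d → ℝ) :=
  {x | (∀ i, 0 ≤ x i) ∧ ∑ i, x i ≤ 1}


/-!
Write `a = (a', N)` with `N = a_{d+1}`. Since `a` is primitive, `z ↦ a'·z mod N` maps `ℤ^d` onto
`ℤ/N`, so its kernel has index `N` and `Λ = diag(a')·{z ∈ ℤ^d : N ∣ a'·z}` is a lattice of
determinant `a_1 ⋯ a_{d+1}`. Every large `b` has at least `s` nonnegative representations, so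
`F = F_s(a)` is finite. Given `x ∈ ℝ^d`, put `m = ⌊x / a'⌋` and pick `b ∈ (F, F + N]` with
`b ≡ a'·m (mod N)`. Each of the at least `s` nonnegative solutions `u` of `a·u = b` yields the
lattice point `y = diag(a')(m − u')`, and `x − y` is nonnegative with coordinate sum below
`∑ a' + b ≤ F + ∑ a`. Hence `μ_s(S_d, Λ) ≤ F + ∑ a`; dividing by `det(Λ)^{1/d}` bounds `ϑ_s(S_d)`.
-/

open Finset Module

def nonnegSolutions {ι : Type*} [Fintype ι] (a : ι → ℤ) (b : ℤ) : Set (ι → ℤ) :=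
  {x | (∀ i, 0 ≤ x i) ∧ ∑ i, a i * x i = b}

section NonnegSolutions

variable {ι : Type*} [Fintype ι] {a : ι → ℤ}

lemma nonnegSolutions_finite (ha : ∀ i, 0 < a i) (b : ℤ) : (nonnegSolutions a b).Finite := by
  classical
  refine (Set.finite_Icc 0 fun _ => |b|).subset fun x ⟨hx, hxb⟩ => ⟨hx, fun i => ?_⟩
  calc x i ≤ a i * x i := le_mul_of_one_le_left (hx i) (ha i)
    _ ≤ ∑ j, a j * x j :=
      single_le_sum (f := fun j => a j * x j) (fun j _ => mul_nonneg (ha j).le (hx j)) (mem_univ i)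
    _ ≤ |b| := hxb ▸ le_abs_self _

lemma nonnegSolutions_eq_empty (ha : ∀ i, 0 < a i) {b : ℤ} (hb : b < 0) :
    nonnegSolutions a b = ∅ :=
  Set.eq_empty_of_forall_notMem fun _ ⟨hx, hxb⟩ =>
    hb.not_ge (hxb ▸ sum_nonneg fun i _ => mul_nonneg (ha i).le (hx i))

lemma exists_forall_ge_nonnegSolutions_nonempty (ha : ∀ i, 0 < a i) (hgcd : univ.gcd a = 1) :
    ∃ n : ℕ, ∀ b : ℤ, n ≤ b → (nonnegSolutions a b).Nonempty := by
  have hsetGcd : Nat.setGcd (Set.range fun i => (a i).toNat) = 1 := by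
    have : (Nat.setGcd (Set.range fun i => (a i).toNat) : ℤ) ∣ univ.gcd a :=
      Finset.dvd_gcd fun i _ => by
        have := Int.natCast_dvd_natCast.mpr
          (Nat.setGcd_dvd_of_mem (Set.mem_range_self (f := fun i => (a i).toNat) i))
        rwa [Int.toNat_of_nonneg (ha i).le] at this
    rw [hgcd] at this
    exact Nat.dvd_one.mp (Int.natCast_dvd_natCast.mp this)
  obtain ⟨n, hn⟩ := Nat.exists_mem_closure_of_ge (Set.range fun i => (a i).toNat)
  refine ⟨n, fun b hb => ?_⟩
  lift b to ℕ using (Nat.cast_nonneg n).trans hb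
  obtain ⟨x, hx⟩ := AddSubmonoid.exists_of_mem_closure_range _ _
    (hn b (by exact_mod_cast hb) (hsetGcd ▸ one_dvd b))
  refine ⟨fun i => x i, fun i => Nat.cast_nonneg _, ?_⟩
  rw [hx]
  push_cast
  exact sum_congr rfl fun i _ => by
    rw [smul_eq_mul, Nat.cast_mul, Int.toNat_of_nonneg (ha i).le, mul_comm]

lemma le_ncard_nonnegSolutions_add [DecidableEq ι] (ha : ∀ i, 0 < a i) {i j : ι} (hij : i ≠ j)
    {b : ℤ} (hb : (nonnegSolutions a b).Nonempty) (s : ℕ) :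
    s ≤ (nonnegSolutions a (b + s * (a i * a j))).ncard := by
  obtain ⟨u, hu, hub⟩ := hb
  let v : ℕ → ι → ℤ := fun k => u + Pi.single i (k * a j) + Pi.single j ((s - k) * a i)
  have hv_inj : Function.Injective v := fun k k' hkk' => by
    have := congrFun hkk' i
    simp only [v, Pi.add_apply, Pi.single_eq_same, Pi.single_eq_of_ne hij, add_zero,
      add_right_inj] at this
    exact_mod_cast mul_right_cancel₀ (ha j).ne' this
  have hv_mem : ∀ k ∈ range s, v k ∈ nonnegSolutions a (b + s * (a i * a j)) := by
    intro k hk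
    have hks : (k : ℤ) ≤ s := by exact_mod_cast (mem_range.mp hk).le
    refine ⟨fun l => ?_, ?_⟩
    · simp only [v, Pi.add_apply, Pi.single_apply]
      split_ifs <;> nlinarith [hu l, ha i, ha j]
    · simp only [v, Pi.add_apply, mul_add, sum_add_distrib, hub, Pi.single_apply, mul_ite,
        mul_zero, sum_ite_eq', mem_univ, if_true]
      ring
  calc s = ((range s).image v).card := by rw [card_image_of_injective _ hv_inj, card_range]
    _ = (((range s).image v : Finset (ι → ℤ)) : Set (ι → ℤ)).ncard := (Set.ncard_coe_finset _).symm
    _ ≤ _ := Set.ncard_le_ncard (by simpa [Set.subset_def] using hv_mem)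
        (nonnegSolutions_finite ha _)

lemma bddAbove_setOf_ncard_nonnegSolutions_lt (ha : ∀ i, 0 < a i) (hgcd : univ.gcd a = 1)
    {i j : ι} (hij : i ≠ j) (s : ℕ) : BddAbove {b | (nonnegSolutions a b).ncard < s} := by
  classical
  obtain ⟨n, hn⟩ := exists_forall_ge_nonnegSolutions_nonempty ha hgcd
  refine ⟨n + s * (a i * a j), fun b hb => ?_⟩
  by_contra! hlt
  have := le_ncard_nonnegSolutions_add ha hij (hn (b - s * (a i * a j)) (by linarith)) s
  rw [sub_add_cancel] at this
  exact (lt_of_lt_of_le hb this).false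

end NonnegSolutions

section sFrob

variable {n s : ℕ} {a : Fin n → ℤ}

lemma le_ncard_nonnegSolutions_of_sFrob_lt (hbdd : BddAbove {b | (nonnegSolutions a b).ncard < s})
    {b : ℤ} (hb : sFrob s a < b) : s ≤ (nonnegSolutions a b).ncard := by
  by_contra! h
  exact hb.not_ge (le_csSup hbdd h)

lemma neg_one_le_sFrob (ha : ∀ i, 0 < a i) (hs : 1 ≤ s)
    (hbdd : BddAbove {b | (nonnegSolutions a b).ncard < s}) : -1 ≤ sFrob s a :=
  le_csSup hbdd <| show (nonnegSolutions a (-1)).ncard < s by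
    rw [nonnegSolutions_eq_empty ha (by norm_num), Set.ncard_empty]
    omega

end sFrob

lemma Submodule.exists_range_mulVecLin_eq_natAbs_det_eq {ι : Type*} [Fintype ι] [DecidableEq ι]
    (H : Submodule ℤ (ι → ℤ)) [Finite ((ι → ℤ) ⧸ H)] :
    ∃ C : Matrix ι ι ℤ, LinearMap.range C.mulVecLin = H ∧
      C.det.natAbs = Nat.card ((ι → ℤ) ⧸ H) := by
  have hrank : finrank ℤ H = Fintype.card ι := by
    rw [(Submodule.finiteQuotient_iff H).mp inferInstance, finrank_fintype_fun_eq_card]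
  let bH : Basis ι ℤ H := (finBasisOfFinrankEq ℤ H hrank).reindex (Fintype.equivFin ι).symm
  refine ⟨.of fun i j => (bH j : ι → ℤ) i, ?_, ?_⟩
  · have : Set.range (Matrix.of fun i j => (bH j : ι → ℤ) i).col = H.subtype '' Set.range bH := by
      rw [← Set.range_comp]; rfl
    rw [Matrix.range_mulVecLin, this, Submodule.span_image, bH.span_eq, Submodule.map_subtype_top]
  · rw [← Submodule.natAbs_det_basis_change (Pi.basisFun ℤ ι) H bH, Basis.det_apply]
    congr 2

def residueLattice {ι : Type*} [Fintype ι] (c : ι → ℤ) (n : ℕ) : Submodule ℤ (ι → ℤ) :=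
  LinearMap.ker (Fintype.linearCombination ℤ fun i => (c i : ZMod n))

section residueLattice

variable {ι : Type*} [Fintype ι] {c : ι → ℤ} {n : ℕ}

lemma linearCombination_intCast_apply (z : ι → ℤ) :
    Fintype.linearCombination ℤ (fun i => (c i : ZMod n)) z = ((∑ i, c i * z i : ℤ) : ZMod n) := by
  simp [Fintype.linearCombination_apply, mul_comm]

lemma mem_residueLattice {z : ι → ℤ} : z ∈ residueLattice c n ↔ (n : ℤ) ∣ ∑ i, c i * z i := by
  rw [residueLattice, LinearMap.mem_ker, linearCombination_intCast_apply,
    ZMod.intCast_zmod_eq_zero_iff_dvd]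

lemma card_quotient_residueLattice (hc : ∃ w : ι → ℤ, ∑ i, c i * w i ≡ 1 [ZMOD n]) :
    Nat.card ((ι → ℤ) ⧸ residueLattice c n) = n := by
  obtain ⟨w, hw⟩ := hc
  have hsurj : Function.Surjective (Fintype.linearCombination ℤ fun i => (c i : ZMod n)) := by
    intro y
    obtain ⟨k, rfl⟩ := ZMod.intCast_surjective y
    refine ⟨k • w, ?_⟩
    rw [map_smul, linearCombination_intCast_apply, (ZMod.intCast_eq_intCast_iff _ _ n).mpr hw]
    simp
  rw [residueLattice, Nat.card_congr (LinearMap.quotKerEquivOfSurjective _ hsurj).toEquiv,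
    Nat.card_zmod]

end residueLattice

lemma exists_latSet_residueLattice {d n : ℕ} (c : Fin d → ℤ) (hn : n ≠ 0)
    (hc : ∃ w : Fin d → ℤ, ∑ i, c i * w i ≡ 1 [ZMOD n]) :
    ∃ B : Matrix (Fin d) (Fin d) ℝ, |B.det| = |∏ i, (c i : ℝ)| * n ∧
      ∀ z ∈ residueLattice c n, (fun i => (c i : ℝ) * z i) ∈ latSet B := by
  have hcard := card_quotient_residueLattice hc
  have : Finite ((Fin d → ℤ) ⧸ residueLattice c n) := Nat.finite_of_card_ne_zero (by rwa [hcard])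
  obtain ⟨C, hC, hCdet⟩ := (residueLattice c n).exists_range_mulVecLin_eq_natAbs_det_eq
  refine ⟨Matrix.diagonal (fun i => (c i : ℝ)) * C.map (Int.cast : ℤ → ℝ), ?_, ?_⟩
  · rw [Matrix.det_mul, Matrix.det_diagonal, abs_mul, ← Int.cast_det, ← Int.cast_abs,
      ← Int.natCast_natAbs, hCdet, hcard, Int.cast_natCast]
  · intro z hz
    rw [← hC] at hz
    obtain ⟨w, rfl⟩ := hz
    refine ⟨w, funext fun i => ?_⟩
    rw [← Matrix.mulVec_mulVec, Matrix.mulVec_diagonal, Matrix.mulVecLin_apply]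
    congr 1
    exact_mod_cast RingHom.map_mulVec (Int.castRingHom ℝ) C w i

lemma exists_latSet_of_gcd_eq_one {d : ℕ} {a : Fin (d + 1) → ℤ} (ha : ∀ i, 0 < a i)
    (hgcd : univ.gcd a = 1) :
    ∃ B : Matrix (Fin d) (Fin d) ℝ, |B.det| = ∏ i, (a i : ℝ) ∧
      ∀ z : Fin d → ℤ, a (Fin.last d) ∣ ∑ i, a i.castSucc * z i →
        (fun i => (a i.castSucc : ℝ) * z i) ∈ latSet B := by
  have hN : ((a (Fin.last d)).toNat : ℤ) = a (Fin.last d) := Int.toNat_of_nonneg (ha _).le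
  obtain ⟨g, hg⟩ := Finset.gcd_eq_sum_mul univ a
  have hc : ∃ w : Fin d → ℤ, ∑ i, a i.castSucc * w i ≡ 1 [ZMOD (a (Fin.last d)).toNat] := by
    refine ⟨fun i => g i.castSucc, Int.modEq_iff_dvd.mpr ⟨g (Fin.last d), ?_⟩⟩
    rw [hgcd, Fin.sum_univ_castSucc] at hg
    rw [hN]
    linarith
  obtain ⟨B, hB, hBL⟩ := exists_latSet_residueLattice _
    (by have := ha (Fin.last d); omega) hc
  refine ⟨B, ?_, fun z hz => hBL z (mem_residueLattice.mpr (hN ▸ hz))⟩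
  rw [hB, Fin.prod_univ_castSucc, abs_of_pos (prod_pos fun i _ => by exact_mod_cast ha _),
    ← Int.cast_natCast, hN]

lemma muCov_nonneg {N s : ℕ} {K L : Set (Fin N → ℝ)} : 0 ≤ muCov s K L :=
  Real.sInf_nonneg fun _ hμ => hμ.1.le

lemma muCov_le {N s : ℕ} {K L : Set (Fin N → ℝ)} {μ : ℝ} (hμ : 0 < μ)
    (h : ∀ x : Fin N → ℝ, ∃ T : Finset (Fin N → ℝ), ↑T ⊆ L ∧ s ≤ T.card ∧
      ∀ y ∈ T, ∃ k ∈ K, x = y + μ • k) :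
    muCov s K L ≤ μ :=
  csInf_le ⟨0, fun _ hμ => hμ.1.le⟩ ⟨hμ, fun x _ => h x⟩

lemma theta_le_muCov_div {s d : ℕ} (K : Set (Fin d → ℝ)) {B : Matrix (Fin d) (Fin d) ℝ}
    (hB : B.det ≠ 0) : theta s d K ≤ muCov s K (latSet B) / |B.det| ^ ((1 : ℝ) / d) :=
  csInf_le ⟨0, by rintro _ ⟨B', -, rfl⟩; exact div_nonneg muCov_nonneg (by positivity)⟩ ⟨B, hB, rfl⟩

lemma exists_mem_stdSimplex'_smul_eq {d : ℕ} {g : ℝ} (hg : 0 < g) {v : Fin d → ℝ}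
    (hv : ∀ i, 0 ≤ v i) (hsum : ∑ i, v i ≤ g) : ∃ k ∈ stdSimplex' d, v = g • k := by
  refine ⟨g⁻¹ • v, ⟨fun i => by simpa using mul_nonneg (inv_nonneg.mpr hg.le) (hv i), ?_⟩, ?_⟩
  · simpa [← mul_sum, inv_mul_le_one₀ hg] using hsum
  · rw [smul_smul, mul_inv_cancel₀ hg.ne', one_smul]

lemma Int.exists_mem_Ioc_modEq (F c : ℤ) {N : ℤ} (hN : 0 < N) :
    ∃ b ∈ Set.Ioc F (F + N), b ≡ c [ZMOD N] := by
  refine ⟨F + 1 + (c - F - 1) % N, ⟨?_, ?_⟩, Int.modEq_iff_dvd.mpr ⟨(c - F - 1) / N, ?_⟩⟩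
  · linarith [Int.emod_nonneg (c - F - 1) hN.ne']
  · linarith [Int.emod_lt_of_pos (c - F - 1) hN]
  · linarith [Int.mul_ediv_add_emod (c - F - 1) N]

lemma mul_floor_div_le {x c : ℝ} (hc : 0 < c) : c * ⌊x / c⌋ ≤ x := by
  rw [mul_comm, ← le_div_iff₀ hc]
  exact Int.floor_le _

lemma lt_mul_floor_div_add {x c : ℝ} (hc : 0 < c) : x < c * ⌊x / c⌋ + c := by
  rw [← mul_add_one, mul_comm, ← div_lt_iff₀ hc]
  exact Int.lt_floor_add_one _

section Covering

variable {d s : ℕ} {a : Fin (d + 1) → ℤ}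

lemma sum_castSucc_of_mem_nonnegSolutions {b : ℤ} {u : Fin (d + 1) → ℤ}
    (hu : u ∈ nonnegSolutions a b) :
    ∑ i : Fin d, a i.castSucc * u i.castSucc = b - a (Fin.last d) * u (Fin.last d) := by
  rw [← hu.2, Fin.sum_univ_castSucc]
  ring

lemma injOn_nonnegSolutions_castSucc (hN : a (Fin.last d) ≠ 0) (b : ℤ) :
    Set.InjOn (fun u i => u (Fin.castSucc i)) (nonnegSolutions a b) := by
  intro u hu v hv huv
  have huv' : ∀ i : Fin d, u i.castSucc = v i.castSucc := fun i => congrFun huv i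
  have hlast : u (Fin.last d) = v (Fin.last d) := by
    have := (sum_castSucc_of_mem_nonnegSolutions hu).symm.trans
      ((sum_congr rfl fun i _ => by rw [huv' i]).trans (sum_castSucc_of_mem_nonnegSolutions hv))
    exact mul_left_cancel₀ hN (by linarith)
  funext i
  exact Fin.lastCases hlast huv' i

lemma exists_covering_finset (ha : ∀ i, 0 < a i) {F : ℤ}
    (hF : ∀ b, F < b → s ≤ (nonnegSolutions a b).ncard) {L : Set (Fin d → ℝ)}
    (hL : ∀ z : Fin d → ℤ, a (Fin.last d) ∣ ∑ i, a i.castSucc * z i →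
      (fun i => (a i.castSucc : ℝ) * z i) ∈ L) (x : Fin d → ℝ) :
    ∃ T : Finset (Fin d → ℝ), ↑T ⊆ L ∧ s ≤ T.card ∧
      ∀ y ∈ T, (∀ i, 0 ≤ x i - y i) ∧ ∑ i, (x i - y i) ≤ F + ∑ i, (a i : ℝ) := by
  classical
  have ha' : ∀ i : Fin d, (0 : ℝ) < a i.castSucc := fun i => by exact_mod_cast ha _
  set N := a (Fin.last d)
  set m : Fin d → ℤ := fun i => ⌊x i / a i.castSucc⌋
  obtain ⟨b, ⟨hFb, hbF⟩, hbc⟩ :=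
    Int.exists_mem_Ioc_modEq F (∑ i, a i.castSucc * m i) (ha (Fin.last d))
  have hfin := nonnegSolutions_finite ha b
  let φ : (Fin (d + 1) → ℤ) → Fin d → ℝ :=
    fun u i => a i.castSucc * ((m i - u i.castSucc : ℤ) : ℝ)
  have hφ_inj : Set.InjOn φ (nonnegSolutions a b) := fun u hu v hv huv =>
    injOn_nonnegSolutions_castSucc (ha _).ne' b hu hv <| funext fun i => by
      have := mul_left_cancel₀ (ha' i).ne' (congrFun huv i)
      exact sub_right_injective (Int.cast_inj.mp this)
  refine ⟨hfin.toFinset.image φ, ?_, ?_, ?_⟩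
  · intro y hy
    obtain ⟨u, hu, rfl⟩ := by simpa using hy
    apply hL
    have hsum : ∑ i, a i.castSucc * (m i - u i.castSucc) =
        (∑ i, a i.castSucc * m i - b) + N * u (Fin.last d) := by
      rw [← sub_add_cancel (∑ i, a i.castSucc * m i) b]
      simp only [mul_sub, sum_sub_distrib, sum_castSucc_of_mem_nonnegSolutions hu]
      ring
    rw [hsum]
    exact dvd_add hbc.dvd (dvd_mul_right _ _)
  · rw [card_image_of_injOn (by simpa using hφ_inj), ← Set.ncard_eq_toFinset_card _ hfin]
    exact hF b hFb
  · intro y hy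
    obtain ⟨u, hu, rfl⟩ := by simpa using hy
    have hdiff : ∀ i, x i - φ u i =
        (x i - a i.castSucc * m i) + a i.castSucc * u i.castSucc := fun i => by
      simp only [φ]; push_cast; ring
    refine ⟨fun i => ?_, ?_⟩
    · rw [hdiff]
      have := mul_floor_div_le (x := x i) (ha' i)
      have := mul_nonneg (ha' i).le (show (0 : ℝ) ≤ u i.castSucc by exact_mod_cast hu.1 i.castSucc)
      linarith
    · have hfrac : ∑ i : Fin d, (x i - a i.castSucc * m i) ≤ ∑ i : Fin d, (a i.castSucc : ℝ) :=
        sum_le_sum fun i _ => by linarith [lt_mul_floor_div_add (x := x i) (ha' i)]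
      have hrest : ∑ i : Fin d, (a i.castSucc : ℝ) * u i.castSucc ≤ F + N := by
        have := sum_castSucc_of_mem_nonnegSolutions hu
        have := mul_nonneg (ha (Fin.last d)).le (hu.1 (Fin.last d))
        exact_mod_cast (show ∑ i : Fin d, a i.castSucc * u i.castSucc ≤ F + N by linarith)
      rw [sum_congr rfl fun i _ => hdiff i, sum_add_distrib, Fin.sum_univ_castSucc]
      linarith

lemma muCov_stdSimplex'_le (hd : 0 < d) (ha : ∀ i, 0 < a i) {F : ℤ} (hF₀ : -1 ≤ F)
    (hF : ∀ b, F < b → s ≤ (nonnegSolutions a b).ncard) {L : Set (Fin d → ℝ)}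
    (hL : ∀ z : Fin d → ℤ, a (Fin.last d) ∣ ∑ i, a i.castSucc * z i →
      (fun i => (a i.castSucc : ℝ) * z i) ∈ L) :
    muCov s (stdSimplex' d) L ≤ F + ∑ i, (a i : ℝ) := by
  have hg : 0 < (F : ℝ) + ∑ i, (a i : ℝ) := by
    have hsum : ((d + 1 : ℕ) : ℝ) ≤ ∑ i, (a i : ℝ) := by
      simpa using sum_le_sum fun i (_ : i ∈ univ) => (show (1 : ℝ) ≤ a i by exact_mod_cast ha i)
    have : (1 : ℝ) ≤ d := by exact_mod_cast hd
    have : (-1 : ℝ) ≤ F := by exact_mod_cast hF₀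
    push_cast at hsum
    linarith
  refine muCov_le hg fun x => ?_
  obtain ⟨T, hTL, hTs, hT⟩ := exists_covering_finset ha hF hL x
  refine ⟨T, hTL, hTs, fun y hy => ?_⟩
  obtain ⟨k, hk, hxy⟩ := exists_mem_stdSimplex'_smul_eq hg (hT y hy).1 (hT y hy).2
  exact ⟨k, hk, by rw [← hxy]; ext i; simp⟩

end Covering

/-- Optimal lower bound for the s-Frobenius number (Theorem 1 i). -/
theorem stmt_0 {d : ℕ} (hd : 2 ≤ d) (s : ℕ) (hs : 1 ≤ s)
    (a : Fin (d + 1) → ℤ) (hpos : ∀ i, 0 < a i)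
    (hprim : Finset.univ.gcd a = 1) :
    (sFrob s a : ℝ) ≥
      theta s d (stdSimplex' d) * (∏ i, (a i : ℝ)) ^ ((1 : ℝ) / d) - ∑ i, (a i : ℝ) := by
  have hbdd := bddAbove_setOf_ncard_nonnegSolutions_lt hpos hprim
    (Fin.castSucc_lt_last (⟨0, by omega⟩ : Fin d)).ne s
  obtain ⟨B, hBdet, hBL⟩ := exists_latSet_of_gcd_eq_one hpos hprim
  have hprod : 0 < ∏ i, (a i : ℝ) := prod_pos fun i _ => by exact_mod_cast hpos i
  have hmuCov := muCov_stdSimplex'_le (by omega) hpos (neg_one_le_sFrob hpos hs hbdd)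
    (fun _ hb => le_ncard_nonnegSolutions_of_sFrob_lt hbdd hb) hBL
  have htheta := theta_le_muCov_div (s := s) (stdSimplex' d)
    (B := B) (abs_pos.mp (hBdet ▸ hprod))
  rw [hBdet, le_div_iff₀ (by positivity)] at htheta
  linarith

end
end

section
/- Let A ∈ ℤ^{m×n} with 1 ≤ m < n satisfy the regularity assumptions, let s ≥ 1 be an integer, let v = A·1, and let L_A^⊥ = {z ∈ ℤ^n : A z = 0}. Then g_s(A) ≤ μ_s(P(A, v) − 1, L_A^⊥), where P(A, v) − 1 denotes the translate of the knapsack polytope P(A, v) by the negative of the all-ones vector, a convex body contained in the real span of L_A^⊥. -/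
open scoped BigOperators
open Matrix

noncomputable section

/-!
If every point of the real span of `L_A^⊥` lies in `y + μ (P(A, v) - 1)` for `s` lattice points
`y`, then `μ` bounds `g_s(A)`. Indeed, let `b = A (μ 1 + r)` with `r ≥ 0`, and let `w` be an integer
solution of `A w = b`, which exists because the `m × m` minors of `A` are coprime. Then
`w - (μ 1 + r)` lies in the real kernel of `A`, which is spanned by `L_A^⊥`, so it equals `y + μ k`
with `k ≥ -1`, `A k = 0` for `s` distinct `y ∈ L_A^⊥`, and the `w - y = μ (1 + k) + r ≥ 0` are `s`
distinct nonnegative integer solutions of `A x = b`; there are only finitely many of these since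
`{x ≥ 0 : A x = 0} = 0`.

Such a `μ` exists: for a nonzero minor `B = A_I`, the columns of `det B • 1 - P adj(B) A` (with `P`
the coordinate embedding along `I`, so that `A P = B`) are integer vectors in the kernel, and they
span it because this matrix acts on the kernel as `det B`. Rounding the coefficients of a kernel
vector in these columns gives a lattice point at bounded distance, and adding multiples of a
nonzero column gives `s` of them.
-/

namespace Matrix

variable {R : Type*} [CommRing R] {η ι : Type*} [Fintype η] [DecidableEq η] [Fintype ι]
  [DecidableEq ι]

omit [Fintype η] [DecidableEq η] in
theorem mul_one_submatrix (M : Matrix η ι R) (I : η → ι) :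
    M * (1 : Matrix ι ι R).submatrix id I = M.submatrix id I := by
  simpa using mul_submatrix_one (Equiv.refl ι) I M

theorem mulVec_one_submatrix_adjugate_mulVec (M : Matrix η ι R) (I : η → ι) (b : η → R) :
    M *ᵥ ((1 : Matrix ι ι R).submatrix id I *ᵥ ((M.submatrix id I).adjugate *ᵥ b)) =
      (M.submatrix id I).det • b := by
  rw [mulVec_mulVec, mulVec_mulVec, mul_one_submatrix, mul_adjugate, smul_mulVec, one_mulVec]

def kernelMatrix (M : Matrix η ι R) (I : η → ι) : Matrix ι ι R :=
  (M.submatrix id I).det • 1 - (1 : Matrix ι ι R).submatrix id I * (M.submatrix id I).adjugate * M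

theorem mul_kernelMatrix (M : Matrix η ι R) (I : η → ι) : M * kernelMatrix M I = 0 := by
  rw [kernelMatrix, Matrix.mul_sub, Matrix.mul_smul, Matrix.mul_one, ← Matrix.mul_assoc,
    ← Matrix.mul_assoc, mul_one_submatrix, mul_adjugate, Matrix.smul_mul, Matrix.one_mul, sub_self]

theorem kernelMatrix_mulVec_of_mulVec_eq_zero (M : Matrix η ι R) (I : η → ι) {d : ι → R}
    (hd : M *ᵥ d = 0) : kernelMatrix M I *ᵥ d = (M.submatrix id I).det • d := by
  rw [kernelMatrix, sub_mulVec, smul_mulVec, one_mulVec, ← mulVec_mulVec, hd, mulVec_zero,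
    sub_zero]

omit [Fintype ι] in
theorem kernelMatrix_apply_self_of_notMem_range (M : Matrix η ι R) {I : η → ι} {j : ι}
    (hj : j ∉ Set.range I) : kernelMatrix M I j j = (M.submatrix id I).det := by
  have hj' : ∀ i, j ≠ I i := fun i h => hj ⟨i, h.symm⟩
  simp [kernelMatrix, mul_apply, hj']

omit [Fintype ι] in
theorem kernelMatrix_map {S : Type*} [CommRing S] (f : R →+* S) (M : Matrix η ι R) (I : η → ι) :
    (kernelMatrix M I).map f = kernelMatrix (M.map f) I := by
  have hdet : ((M.submatrix id I).map f).det = f (M.submatrix id I).det := (f.map_det _).symm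
  have hadj : ((M.submatrix id I).map f).adjugate = (M.submatrix id I).adjugate.map f :=
    (f.map_adjugate _).symm
  rw [kernelMatrix, kernelMatrix, submatrix_map, hdet, hadj]
  ext i j
  by_cases h : i = j <;> simp [one_apply, mul_apply, h, apply_ite f]

theorem exists_mulVec_eq_of_gcd_det_eq_one [IsBezout R] [NormalizedGCDMonoid R]
    (M : Matrix η ι R) (hM : Finset.univ.gcd (fun I : η ↪ ι => (M.submatrix id I).det) = 1)
    (b : η → R) : ∃ w, M *ᵥ w = b := by
  obtain ⟨g, hg⟩ := Finset.gcd_eq_sum_mul Finset.univ fun I : η ↪ ι => (M.submatrix id I).det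
  refine ⟨∑ I : η ↪ ι, g I •
    ((1 : Matrix ι ι R).submatrix id I *ᵥ ((M.submatrix id I).adjugate *ᵥ b)), ?_⟩
  simp only [mulVec_sum, mulVec_smul, mulVec_one_submatrix_adjugate_mulVec, smul_smul,
    ← Finset.sum_smul, mul_comm (g _), ← hg, hM, one_smul]

end Matrix

theorem exists_mem_norm_sub_le_sum_norm {E ι : Type*} [NormedAddCommGroup E] [NormedSpace ℝ E]
    [Fintype ι] (L : AddSubgroup E) {z : ι → E} (hz : ∀ i, z i ∈ L) {x : E}
    (hx : x ∈ Submodule.span ℝ (Set.range z)) : ∃ y ∈ L, ‖x - y‖ ≤ ∑ i, ‖z i‖ := by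
  obtain ⟨c, rfl⟩ := (Submodule.mem_span_range_iff_exists_fun ℝ).1 hx
  refine ⟨∑ i, ⌊c i⌋ • z i, L.sum_mem fun i _ => L.zsmul_mem (hz i) _, ?_⟩
  calc ‖∑ i, c i • z i - ∑ i, ⌊c i⌋ • z i‖ = ‖∑ i, Int.fract (c i) • z i‖ := by
        simp only [← Finset.sum_sub_distrib, Int.fract, sub_smul, Int.cast_smul_eq_zsmul]
    _ ≤ ∑ i, ‖Int.fract (c i) • z i‖ := norm_sum_le _ _
    _ ≤ ∑ i, ‖z i‖ := Finset.sum_le_sum fun i _ => by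
        rw [norm_smul, Real.norm_of_nonneg (Int.fract_nonneg _)]
        exact mul_le_of_le_one_left (norm_nonneg _) (Int.fract_lt_one _).le

theorem exists_finset_card_eq_norm_sub_le {E ι : Type*} [NormedAddCommGroup E] [NormedSpace ℝ E]
    [Fintype ι] (L : AddSubgroup E) {z : ι → E} (hz : ∀ i, z i ∈ L) {x : E}
    (hx : x ∈ Submodule.span ℝ (Set.range z)) {z₀ : E} (hz₀ : z₀ ∈ L) (hz₀' : z₀ ≠ 0) (s : ℕ) :
    ∃ T : Finset E, ↑T ⊆ (L : Set E) ∧ T.card = s ∧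
      ∀ y ∈ T, ‖x - y‖ ≤ ∑ i, ‖z i‖ + s * ‖z₀‖ := by
  classical
  obtain ⟨y, hyL, hy⟩ := exists_mem_norm_sub_le_sum_norm L hz hx
  have hinj : Function.Injective fun t : ℕ => y + (t : ℝ) • z₀ :=
    (add_right_injective y).comp ((smul_left_injective ℝ hz₀').comp Nat.cast_injective)
  refine ⟨(Finset.range s).image fun t : ℕ => y + (t : ℝ) • z₀, ?_, ?_, ?_⟩
  · intro _ hy'
    obtain ⟨t, -, rfl⟩ := Finset.mem_image.1 hy'
    rw [SetLike.mem_coe, Nat.cast_smul_eq_nsmul]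
    exact L.add_mem hyL (L.nsmul_mem hz₀ t)
  · rw [Finset.card_image_of_injective _ hinj, Finset.card_range]
  · intro _ hy'
    obtain ⟨t, ht, rfl⟩ := Finset.mem_image.1 hy'
    have ht : (t : ℝ) ≤ s := by exact_mod_cast (Finset.mem_range.1 ht).le
    calc ‖x - (y + (t : ℝ) • z₀)‖ ≤ ‖x - y‖ + ‖(t : ℝ) • z₀‖ := by
          rw [← sub_sub]; exact norm_sub_le _ _
      _ ≤ ∑ i, ‖z i‖ + s * ‖z₀‖ := by
          rw [norm_smul, Real.norm_natCast]
          gcongr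

theorem ProperCone.exists_pos_mul_norm_le_norm {E F : Type*} [NormedAddCommGroup E]
    [NormedSpace ℝ E] [FiniteDimensional ℝ E] [NormedAddCommGroup F] [NormedSpace ℝ F]
    (K : ProperCone ℝ E) (f : E →ₗ[ℝ] F) (hf : ∀ x ∈ K, f x = 0 → x = 0) :
    ∃ c > 0, ∀ x ∈ K, c * ‖x‖ ≤ ‖f x‖ := by
  have hS : IsCompact (Metric.sphere (0 : E) 1 ∩ K) :=
    (isCompact_sphere 0 1).inter_right K.isClosed
  obtain ⟨c, hc, hcS⟩ := hS.exists_forall_le' f.continuous_of_finiteDimensional.norm.continuousOn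
    (a := 0) fun x hx => norm_pos_iff.2 fun h => by
      simp [hf x hx.2 h] at hx
  refine ⟨c, hc, fun x hx => ?_⟩
  rcases eq_or_ne x 0 with rfl | hx0
  · simp
  · have hu := hcS (‖x‖⁻¹ • x)
      ⟨by simp [norm_smul, hx0], K.smul_mem hx (inv_nonneg.2 (norm_nonneg x))⟩
    rw [map_smul, norm_smul, norm_inv, norm_norm, le_inv_mul_iff₀ (norm_pos_iff.2 hx0)] at hu
    linarith

/-- `muCov s K L` is the infimum of the `μ > 0` with `IsSCovering s K L μ`. -/
def IsSCovering {N : ℕ} (s : ℕ) (K L : Set (Fin N → ℝ)) (μ : ℝ) : Prop :=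
  ∀ x ∈ Submodule.span ℝ L,
    ∃ T : Finset (Fin N → ℝ), ↑T ⊆ L ∧ s ≤ T.card ∧ ∀ y ∈ T, ∃ k ∈ K, x = y + μ • k

/-- `gDiag s A w` is the infimum of the `t ≥ 0` with `IsFrobeniusBound s A w t`. -/
def IsFrobeniusBound {m n : ℕ} (s : ℕ) (A : Matrix (Fin m) (Fin n) ℤ) (w : Fin m → ℝ) (t : ℝ) :
    Prop :=
  ∀ b : Fin m → ℤ, Rvec b ∈ interior ((fun c => t • w + c) '' coneOf A) → b ∈ feas s A

section IntegerKernel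

variable {m n : ℕ} (A : Matrix (Fin m) (Fin n) ℤ)

theorem Rmat_mulVec_Rvec (z : Fin n → ℤ) :
    Rmat A *ᵥ Rvec z = Rvec (A *ᵥ z) := by
  funext k
  simp [Rmat, Rvec, mulVec, dotProduct]

def kerLattice : AddSubgroup (Fin n → ℝ) where
  carrier := kerLat A
  zero_mem' := ⟨0, mulVec_zero A, by ext; simp [Rvec]⟩
  add_mem' := by
    rintro _ _ ⟨z, hz, rfl⟩ ⟨w, hw, rfl⟩
    exact ⟨z + w, by rw [mulVec_add, hz, hw, add_zero], by ext; simp [Rvec]⟩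
  neg_mem' := by
    rintro _ ⟨z, hz, rfl⟩
    exact ⟨-z, by rw [mulVec_neg, hz, neg_zero], by ext; simp [Rvec]⟩

theorem Rvec_col_kernelMatrix_mem_kerLat (I : Fin m → Fin n) (j : Fin n) :
    Rvec ((kernelMatrix A I).col j) ∈ kerLat A :=
  ⟨_, by rw [← mulVec_single_one, mulVec_mulVec, mul_kernelMatrix, zero_mulVec], rfl⟩

theorem mem_span_col_kernelMatrix {I : Fin m → Fin n}
    (hI : (A.submatrix id I).det ≠ 0) {d : Fin n → ℝ} (hd : Rmat A *ᵥ d = 0) :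
    d ∈ Submodule.span ℝ (Set.range fun j => Rvec ((kernelMatrix A I).col j)) := by
  have hZ : (kernelMatrix A I).map (Int.castRingHom ℝ) = kernelMatrix (Rmat A) I :=
    kernelMatrix_map _ A I
  have hdet : ((Rmat A).submatrix id I).det = (A.submatrix id I).det :=
    ((Int.castRingHom ℝ).map_det _).symm
  have hmem : kernelMatrix (Rmat A) I *ᵥ d ∈
      Submodule.span ℝ (Set.range (kernelMatrix (Rmat A) I).col) := by
    rw [← range_mulVecLin]
    exact ⟨d, rfl⟩
  rw [kernelMatrix_mulVec_of_mulVec_eq_zero _ _ hd, hdet, ← hZ] at hmem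
  have := Submodule.smul_mem _ ((A.submatrix id I).det : ℝ)⁻¹ hmem
  rwa [inv_smul_smul₀ (by exact_mod_cast hI)] at this

theorem mem_span_kerLat_iff {I : Fin m → Fin n}
    (hI : (A.submatrix id I).det ≠ 0) {d : Fin n → ℝ} :
    d ∈ Submodule.span ℝ (kerLat A) ↔ Rmat A *ᵥ d = 0 := by
  constructor
  · intro hd
    have hle : Submodule.span ℝ (kerLat A) ≤ LinearMap.ker (Rmat A).mulVecLin := by
      rw [Submodule.span_le]
      rintro _ ⟨z, hz, rfl⟩
      rw [SetLike.mem_coe, LinearMap.mem_ker, mulVecLin_apply, Rmat_mulVec_Rvec, hz]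
      ext
      simp [Rvec]
    exact hle hd
  · intro hd
    refine Submodule.span_mono ?_ (mem_span_col_kernelMatrix A hI hd)
    rintro _ ⟨j, rfl⟩
    exact Rvec_col_kernelMatrix_mem_kerLat A I j

theorem finite_nonneg_solutions
    (hA : ∀ x : Fin n → ℝ, (∀ i, 0 ≤ x i) → Rmat A *ᵥ x = 0 → x = 0) (b : Fin m → ℤ) :
    {x : Fin n → ℤ | (∀ i, 0 ≤ x i) ∧ A *ᵥ x = b}.Finite := by
  obtain ⟨c, hc, hcK⟩ := (ProperCone.positive ℝ (Fin n → ℝ)).exists_pos_mul_norm_le_norm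
    (Rmat A).mulVecLin fun x hx => hA x hx
  refine (Set.finite_Icc (0 : Fin n → ℤ) fun _ => ⌈‖Rvec b‖ / c⌉).subset ?_
  rintro x ⟨hx, hxb⟩
  refine ⟨hx, fun i => ?_⟩
  have hbound : c * ‖Rvec x‖ ≤ ‖Rvec b‖ := by
    simpa [Rmat_mulVec_Rvec, hxb] using hcK (Rvec x) fun i => Int.cast_nonneg (hx i)
  have hi : (x i : ℝ) ≤ ‖Rvec b‖ / c := by
    rw [le_div_iff₀' hc]
    calc c * (x i : ℝ) ≤ c * ‖Rvec x‖ := by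
          gcongr
          exact (Real.le_norm_self _).trans (norm_le_pi_norm (Rvec x) i)
      _ ≤ ‖Rvec b‖ := hbound
  exact_mod_cast hi.trans (Int.le_ceil _)

theorem mem_feas_of_finset_subset {s : ℕ} {b : Fin m → ℤ}
    (hfin : {x : Fin n → ℤ | (∀ i, 0 ≤ x i) ∧ A *ᵥ x = b}.Finite) {T : Finset (Fin n → ℝ)}
    (hT : ↑T ⊆ Rvec '' {x : Fin n → ℤ | (∀ i, 0 ≤ x i) ∧ A *ᵥ x = b}) (hs : s ≤ T.card) :
    b ∈ feas s A :=
  calc s ≤ T.card := hs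
    _ = (T : Set (Fin n → ℝ)).ncard := (Set.ncard_coe_finset T).symm
    _ ≤ (Rvec '' {x : Fin n → ℤ | (∀ i, 0 ≤ x i) ∧ A *ᵥ x = b}).ncard :=
        Set.ncard_le_ncard hT (hfin.image _)
    _ ≤ _ := Set.ncard_image_le hfin

theorem mem_knap_sub_one_iff {k : Fin n → ℝ} :
    k ∈ (fun x => x - fun _ => (1 : ℝ)) '' knap A (vA A) ↔
      (∀ i, -1 ≤ k i) ∧ Rmat A *ᵥ k = 0 := by
  constructor
  · rintro ⟨x, ⟨hx, hxv⟩, rfl⟩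
    exact ⟨fun i => by simpa using hx i, by rw [mulVec_sub, hxv, vA, sub_self]⟩
  · rintro ⟨hk, hk0⟩
    refine ⟨k + fun _ => 1, ⟨fun i => by simpa [neg_le_iff_add_nonneg] using hk i, ?_⟩, by simp⟩
    rw [mulVec_add, hk0, zero_add, vA]

theorem exists_isSCovering (hmn : m < n) {I : Fin m ↪ Fin n} (hI : (A.submatrix id I).det ≠ 0)
    (s : ℕ) :
    ∃ μ > 0, IsSCovering s ((fun x => x - fun _ => (1 : ℝ)) '' knap A (vA A)) (kerLat A) μ := by
  obtain ⟨j₀, hj₀⟩ : ∃ j, j ∉ Set.range I := by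
    by_contra! h
    have := Fintype.card_le_of_surjective I h
    simp only [Fintype.card_fin] at this
    omega
  set z : Fin n → Fin n → ℝ := fun j => Rvec ((kernelMatrix A I).col j)
  have hz : ∀ j, z j ∈ kerLattice A := Rvec_col_kernelMatrix_mem_kerLat A I
  have hz₀ : z j₀ ≠ 0 := fun h => hI <| by
    simpa [z, Rvec, kernelMatrix_apply_self_of_notMem_range A hj₀] using congrFun h j₀
  set R := ∑ j, ‖z j‖ + s * ‖z j₀‖
  have hR : 0 ≤ R := by positivity
  refine ⟨R + 1, by linarith, fun x hx => ?_⟩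
  have hx0 := (mem_span_kerLat_iff A hI).1 hx
  obtain ⟨T, hTL, hTs, hTx⟩ := exists_finset_card_eq_norm_sub_le (kerLattice A) hz
    (mem_span_col_kernelMatrix A hI hx0) (hz j₀) hz₀ s
  refine ⟨T, hTL, hTs.ge, fun y hy =>
    ⟨(R + 1)⁻¹ • (x - y), (mem_knap_sub_one_iff A).2 ⟨fun i => ?_, ?_⟩, ?_⟩⟩
  · have hxy : |x i - y i| ≤ R := (norm_le_pi_norm (x - y) i).trans (hTx y hy)
    rw [Pi.smul_apply, smul_eq_mul, le_inv_mul_iff₀ (by linarith), Pi.sub_apply]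
    linarith [neg_abs_le (x i - y i)]
  · rw [mulVec_smul, mulVec_sub, hx0,
      (mem_span_kerLat_iff A hI).1 (Submodule.subset_span (hTL hy)), sub_self, smul_zero]
  · rw [smul_inv_smul₀ (by linarith), add_sub_cancel]

theorem isFrobeniusBound_of_isSCovering (hA : regular A) {I : Fin m ↪ Fin n}
    (hI : (A.submatrix id I).det ≠ 0) {s : ℕ} {μ : ℝ} (hμ : 0 ≤ μ)
    (hcov : IsSCovering s ((fun x => x - fun _ => (1 : ℝ)) '' knap A (vA A)) (kerLat A) μ) :
    IsFrobeniusBound s A (vA A) μ := by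
  intro b hb
  obtain ⟨_, ⟨r, hr, rfl⟩, hrb⟩ := interior_subset hb
  obtain ⟨w, hw⟩ := exists_mulVec_eq_of_gcd_det_eq_one A hA.1 b
  have hd : Rvec w - (μ • (fun _ => 1) + r) ∈ Submodule.span ℝ (kerLat A) := by
    rw [mem_span_kerLat_iff A hI, mulVec_sub, Rmat_mulVec_Rvec, hw, mulVec_add, mulVec_smul,
      ← vA, ← hrb, sub_self]
  obtain ⟨T, hTL, hTs, hTK⟩ := hcov _ hd
  refine mem_feas_of_finset_subset A (finite_nonneg_solutions A hA.2 b)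
    (T := T.image (Rvec w - ·)) ?_ (by rwa [Finset.card_image_of_injective _ sub_right_injective])
  intro _ hy
  obtain ⟨y, hyT, rfl⟩ := Finset.mem_image.1 hy
  obtain ⟨z, hz, rfl⟩ := hTL hyT
  obtain ⟨k, hk, hdk⟩ := hTK _ hyT
  refine ⟨w - z, ⟨fun i => ?_, by rw [mulVec_sub, hw, hz, sub_zero]⟩, by ext; simp [Rvec]⟩
  have hki := congrFun hdk i
  simp only [Rvec, Pi.sub_apply, Pi.add_apply, Pi.smul_apply, smul_eq_mul, mul_one] at hki
  have hk1 : 0 ≤ 1 + k i := by linarith [((mem_knap_sub_one_iff A).1 hk).1 i]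
  have : (0 : ℝ) ≤ ((w i - z i : ℤ) : ℝ) := by
    push_cast
    nlinarith [mul_nonneg hμ hk1, hr i]
  exact_mod_cast this

end IntegerKernel

theorem stmt_5_general {m n : ℕ} (hmn : m < n) (s : ℕ)
    (A : Matrix (Fin m) (Fin n) ℤ) (hA : regular A) :
    gFrob s A ≤ muCov s ((fun x => x - fun _ => (1 : ℝ)) '' knap A (vA A)) (kerLat A) := by
  obtain ⟨I, hI⟩ : ∃ I : Fin m ↪ Fin n, (A.submatrix id I).det ≠ 0 := by
    by_contra! h
    exact one_ne_zero (hA.1.symm.trans (Finset.gcd_eq_zero_iff.2 fun I _ => h I))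
  refine csInf_le_csInf ⟨0, fun t ht => ht.1⟩ (exists_isSCovering A hmn hI s) ?_
  rintro μ ⟨hμ, hcov⟩
  exact ⟨hμ.le, isFrobeniusBound_of_isSCovering A hA hI hμ.le hcov⟩

/-- g_s(A) is at most the s-covering radius of P(A,v) − 1 w.r.t. L_A^⊥ (Lemma 1). -/
theorem stmt_5 {m n : ℕ} (hm : 1 ≤ m) (hmn : m < n) (s : ℕ) (hs : 1 ≤ s)
    (A : Matrix (Fin m) (Fin n) ℤ) (hA : regular A) :
    gFrob s A ≤ muCov s ((fun x => x - fun _ => (1 : ℝ)) '' knap A (vA A)) (kerLat A) :=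
  stmt_5_general hmn s A hA

end
end

section
/- Let A ∈ ℤ^{m×n} with 1 ≤ m < n satisfy the regularity assumptions, let s ≥ 1 be an integer, and let w ∈ ℤ^m lie in the interior of the cone C generated by the columns of A, say w = Aρ with ρ ∈ ℝ^n having all entries positive. Let ρ_max and ρ_min denote the maximum and minimum entries of ρ. Then (1/ρ_max)·g_s(A) ≤ g_s(A, w) ≤ (1/ρ_min)·g_s(A). -/
open scoped BigOperators
open Matrix

noncomputable section

/-- Auxiliary: the set whose infimum defines `gDiag`. -/
def Tset' {m n : ℕ} (s : ℕ) (A : Matrix (Fin m) (Fin n) ℤ) (u : Fin m → ℝ) : Set ℝ :=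
  {t : ℝ | 0 ≤ t ∧
    ∀ b : Fin m → ℤ, Rvec b ∈ interior ((fun c => t • u + c) '' coneOf A) → b ∈ feas s A}

lemma gDiag_eq_sInf_Tset' {m n : ℕ} (s : ℕ) (A : Matrix (Fin m) (Fin n) ℤ) (u : Fin m → ℝ) :
    gDiag s A u = sInf (Tset' s A u) := rfl

lemma coneOf_shift_subset {m n : ℕ} (A : Matrix (Fin m) (Fin n) ℤ)
    {u u' d : Fin m → ℝ} (hd : d ∈ coneOf A) (h : u = u' + d) :
    (fun c => u + c) '' coneOf A ⊆ (fun c => u' + c) '' coneOf A := by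
  rintro _ ⟨c, ⟨x, hx, hxc⟩, rfl⟩
  obtain ⟨y, hy, hyd⟩ := hd
  refine ⟨d + c, ⟨y + x, fun i => add_nonneg (hy i) (hx i), ?_⟩, ?_⟩
  · rw [Matrix.mulVec_add, hyd, hxc]
  · simp only [h]; abel

lemma Tset'_transfer {m n : ℕ} (s : ℕ) (A : Matrix (Fin m) (Fin n) ℤ)
    {u u' : Fin m → ℝ} {t t' : ℝ} (ht' : 0 ≤ t')
    (hd : ∃ d ∈ coneOf A, t' • u = t • u' + d)
    (h : t ∈ Tset' s A u') : t' ∈ Tset' s A u := by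
  obtain ⟨d, hdC, hu⟩ := hd
  exact ⟨ht', fun b hb => h.2 b (interior_mono (coneOf_shift_subset A hdC hu) hb)⟩


/-- Comparison of g_s(A, w) with g_s(A) via a positive representation w = Aρ. -/
theorem stmt_6 {m n : ℕ} (hm : 1 ≤ m) (hmn : m < n) (s : ℕ) (hs : 1 ≤ s)
    (A : Matrix (Fin m) (Fin n) ℤ) (hA : regular A)
    (w : Fin m → ℤ) (ρ : Fin n → ℝ) (hρ : ∀ i, 0 < ρ i)
    (hw : (Rmat A).mulVec ρ = Rvec w) :
    (1 / sSup (Set.range ρ)) * gFrob s A ≤ gDiag s A (Rvec w) ∧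
      gDiag s A (Rvec w) ≤ (1 / sInf (Set.range ρ)) * gFrob s A := by
  have hn : 0 < n := by omega
  haveI : Nonempty (Fin n) := ⟨⟨0, hn⟩⟩
  have hRne : (Set.range ρ).Nonempty := Set.range_nonempty ρ
  have hRfin : (Set.range ρ).Finite := Set.finite_range ρ
  set rmin := sInf (Set.range ρ) with hrmin_def
  set rmax := sSup (Set.range ρ) with hrmax_def
  obtain ⟨i0, hi0⟩ := hRne.csInf_mem hRfin
  have hrmin_pos : 0 < rmin := by rw [hrmin_def, ← hi0]; exact hρ i0
  have hmin_le : ∀ i, rmin ≤ ρ i := fun i => csInf_le hRfin.bddBelow ⟨i, rfl⟩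
  have hle_max : ∀ i, ρ i ≤ rmax := fun i => le_csSup hRfin.bddAbove ⟨i, rfl⟩
  have hrmax_pos : 0 < rmax := lt_of_lt_of_le (hρ i0) (hle_max i0)
  set Sv := Tset' s A (vA A) with hSv_def
  set Sw := Tset' s A (Rvec w) with hSw_def
  have hbddv : BddBelow Sv := ⟨0, fun t ht => ht.1⟩
  have hbddw : BddBelow Sw := ⟨0, fun t ht => ht.1⟩
  -- Map from Sv to Sw
  have map1 : ∀ t ∈ Sv, t / rmin ∈ Sw := by
    intro t ht
    refine Tset'_transfer s A (div_nonneg ht.1 hrmin_pos.le) ?_ ht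
    refine ⟨(Rmat A).mulVec ((t / rmin) • ρ - t • (fun _ => (1:ℝ))),
      ⟨(t / rmin) • ρ - t • (fun _ => (1:ℝ)), fun i => ?_, rfl⟩, ?_⟩
    · have h1 : t * rmin ≤ t * ρ i := mul_le_mul_of_nonneg_left (hmin_le i) ht.1
      have h2 : t ≤ t / rmin * ρ i := by
        rw [div_mul_eq_mul_div, le_div_iff₀ hrmin_pos, mul_comm t rmin] at *
        linarith
      simpa using sub_nonneg.mpr h2
    · rw [← hw]
      unfold vA
      rw [← Matrix.mulVec_smul, ← Matrix.mulVec_smul, ← Matrix.mulVec_add]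
      have harg : (t • (fun _ => (1:ℝ)) + ((t / rmin) • ρ - t • (fun _ => (1:ℝ))))
          = (t / rmin) • ρ := by
        funext i
        simp only [Pi.smul_apply, Pi.add_apply, Pi.sub_apply, smul_eq_mul]
        ring
      rw [harg]
  -- Map from Sw to Sv
  have map2 : ∀ t ∈ Sw, rmax * t ∈ Sv := by
    intro t ht
    refine Tset'_transfer s A (mul_nonneg hrmax_pos.le ht.1) ?_ ht
    refine ⟨(Rmat A).mulVec ((rmax * t) • (fun _ => (1:ℝ)) - t • ρ),
      ⟨(rmax * t) • (fun _ => (1:ℝ)) - t • ρ, fun i => ?_, rfl⟩, ?_⟩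
    · have h1 : t * ρ i ≤ t * rmax := mul_le_mul_of_nonneg_left (hle_max i) ht.1
      simp only [Pi.sub_apply, Pi.smul_apply, smul_eq_mul, mul_one, sub_nonneg]
      linarith
    · rw [← hw]
      unfold vA
      rw [← Matrix.mulVec_smul, ← Matrix.mulVec_smul, ← Matrix.mulVec_add]
      have harg : (t • ρ + ((rmax * t) • (fun _ => (1:ℝ)) - t • ρ))
          = (rmax * t) • (fun _ => (1:ℝ)) := by
        funext i
        simp only [Pi.smul_apply, Pi.add_apply, Pi.sub_apply, smul_eq_mul]
        ring
      rw [harg]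
  have hgv : gFrob s A = sInf Sv := rfl
  have hgw : gDiag s A (Rvec w) = sInf Sw := rfl
  rw [hgv, hgw]
  constructor
  · -- (1/rmax) * sInf Sv ≤ sInf Sw
    by_cases hSw : Sw.Nonempty
    · apply le_csInf hSw
      intro t ht
      have h1 : sInf Sv ≤ rmax * t := csInf_le hbddv (map2 t ht)
      have h2 : 1 / rmax * sInf Sv ≤ 1 / rmax * (rmax * t) :=
        mul_le_mul_of_nonneg_left h1 (by positivity)
      calc 1 / rmax * sInf Sv ≤ 1 / rmax * (rmax * t) := h2
        _ = t := by field_simp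
    · have hSvE : Sv = ∅ := by
        rw [Set.eq_empty_iff_forall_notMem]
        intro t ht
        exact hSw ⟨t / rmin, map1 t ht⟩
      rw [hSvE, Set.not_nonempty_iff_eq_empty.mp hSw, Real.sInf_empty]
      simp
  · -- sInf Sw ≤ (1/rmin) * sInf Sv
    by_cases hSv : Sv.Nonempty
    · have key : rmin * sInf Sw ≤ sInf Sv := by
        apply le_csInf hSv
        intro t ht
        have h1 : sInf Sw ≤ t / rmin := csInf_le hbddw (map1 t ht)
        have h2 : rmin * sInf Sw ≤ rmin * (t / rmin) :=
          mul_le_mul_of_nonneg_left h1 hrmin_pos.le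
        calc rmin * sInf Sw ≤ rmin * (t / rmin) := h2
          _ = t := by field_simp
      rw [one_div, inv_mul_eq_div, le_div_iff₀ hrmin_pos, mul_comm]
      exact key
    · have hSwE : Sw = ∅ := by
        rw [Set.eq_empty_iff_forall_notMem]
        intro t ht
        exact hSv ⟨rmax * t, map2 t ht⟩
      rw [hSwE, Set.not_nonempty_iff_eq_empty.mp hSv, Real.sInf_empty]
      simp

end
end
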